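/- arXiv:1802.02025 — 2 statements merged into one kernel-verified Lean document; each statement's English description precedes it below -/
import Mathlib

section
/- Let A be a commutative Noetherian ring, let P be a finite partially ordered set, and let G be an inverse system over P valued in A-modules. Define the inverse system Π⁰(G) by Π⁰(G)(p) = ∏_{q ≤ p} G(q), where for p ≤ p' the transition map Π⁰(G)(p') → Π⁰(G)(p) is the natural projection. Then Π⁰(G) is a flasque inverse system, and the natural morphism of inverse systems G → Π⁰(G), whose component at p has as coordinates the transition maps G(p) → G(q) for q ≤ p, is a monomorphism. In particular, every inverse system over P embeds into a flasque inverse system. -/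
/-! A section of `Π⁰(G)` over a lower set `U` is determined by its diagonal entries `y_q(q)`,
`q ∈ U`, since compatibility forces `y_p(q) = y_q(q)` for `q ≤ p`; extending the diagonal by zero
outside `U` gives a global section restricting to it. The coordinate `q = p` of `ι_p : G(p) → Π⁰(G)(p)`
is the identity, so `ι` is injective. -/

open CategoryTheory CategoryTheory.Limits Opposite

noncomputable section

variable {A : Type} [CommRing A] {P : Type} [PartialOrder P]

/-- The inclusion of a subset `U ⊆ P`, viewed as a functor between the associated
(preorder) categories. -/
def inclFunctor (U : Set P) : (U : Type) ⥤ P :=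
  Monotone.functor (f := fun q : U => (q : P)) fun _ _ h => h

/-- An inverse system `G` over the finite poset `P` valued in `A`-modules (a functor
`Pᵒᵖ ⥤ ModuleCat A`) is *flasque* if for every open set `U` of `P` in the dual
Alexandrov topology (i.e. for every lower set `U ⊆ P`) the natural restriction map
`lim_{p ∈ P} G(p) → lim_{u ∈ U} G(u)` is surjective. -/
def IsFlasque (G : Pᵒᵖ ⥤ ModuleCat A) : Prop :=
  ∀ U : Set P, IsLowerSet U →
    Function.Surjective (limit.pre G (inclFunctor U).op)

/-- The inverse system `Π⁰(G)` with `Π⁰(G)(p) = ∏_{q ≤ p} G(q)`, where for `p ≤ p'`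
the transition map `Π⁰(G)(p') → Π⁰(G)(p)` is the natural projection. -/
def Pi0 (G : Pᵒᵖ ⥤ ModuleCat A) : Pᵒᵖ ⥤ ModuleCat A where
  obj X := ModuleCat.of A (∀ q : {q : P // q ≤ X.unop}, G.obj (op (q : P)))
  map {X Y} f := ModuleCat.ofHom <|
    LinearMap.pi fun q : {q : P // q ≤ Y.unop} =>
      LinearMap.proj (⟨(q : P), q.2.trans (leOfHom f.unop)⟩ : {q : P // q ≤ X.unop})
  map_id _ := rfl
  map_comp _ _ := rfl

/-- The natural morphism of inverse systems `G ⟶ Π⁰(G)`, whose component at `p` has as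
coordinates the transition maps `G(p) → G(q)` for `q ≤ p`. -/
def iotaPi0 (G : Pᵒᵖ ⥤ ModuleCat A) : G ⟶ Pi0 G where
  app X := ModuleCat.ofHom <| LinearMap.pi fun q : {q : P // q ≤ X.unop} =>
    ((G.map (homOfLE q.2).op).hom : G.obj X →ₗ[A] G.obj (op (q : P)))
  naturality X Y f := by
    ext g
    funext q
    show (G.map f ≫ G.map (homOfLE q.2).op).hom g = (G.map ((homOfLE _).op)).hom g
    rw [← G.map_comp]
    congr 1

universe u

theorem ModuleCat.exists_limit_π_eq {R : Type u} [Ring R] {J : Type*} [Category J]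
    (F : J ⥤ ModuleCat.{u} R) [HasLimit F] (x : ∀ j, F.obj j)
    (hx : ∀ {i j : J} (f : i ⟶ j), F.map f (x i) = x j) :
    ∃ y : ↑(limit F), ∀ j, limit.π F j y = x j := by
  let s : Cone F :=
    { pt := ModuleCat.of R R
      π :=
        { app := fun j => ModuleCat.ofHom (LinearMap.toSpanSingleton R _ (x j))
          naturality := fun i j f => by
            ext
            simp [hx f] } }
  refine ⟨limit.lift F s (1 : R), fun j => ?_⟩
  rw [← ConcreteCategory.comp_apply, limit.lift_π]
  simp [s]

namespace Pi0

variable (G : Pᵒᵖ ⥤ ModuleCat A)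

theorem limit_π_apply_eq_diagonal {U : Set P} (y : ↑(limit ((inclFunctor U).op ⋙ Pi0 G)))
    (u : Uᵒᵖ) (q : {q : P // q ≤ u.unop.1}) (hq : (q : P) ∈ U) :
    (limit.π ((inclFunctor U).op ⋙ Pi0 G) u y :
        ∀ q : {q : P // q ≤ u.unop.1}, G.obj (op (q : P))) q =
      (limit.π ((inclFunctor U).op ⋙ Pi0 G) (op ⟨q, hq⟩) y :
        ∀ q' : {q' : P // q' ≤ q}, G.obj (op (q' : P))) ⟨q, le_rfl⟩ := by
  rw [← limit.w _ (homOfLE (show (⟨q, hq⟩ : U) ≤ u.unop from q.2)).op]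
  rfl

theorem isFlasque : IsFlasque (Pi0 G) := by
  classical
  intro U hU y
  let diag (p : P) : G.obj (op p) :=
    if h : p ∈ U then
      (limit.π ((inclFunctor U).op ⋙ Pi0 G) (op ⟨p, h⟩) y :
        ∀ q : {q : P // q ≤ p}, G.obj (op (q : P))) ⟨p, le_rfl⟩
    else 0
  obtain ⟨z, hz⟩ :=
    ModuleCat.exists_limit_π_eq (Pi0 G) (fun _ q => diag q) (fun _ => rfl)
  refine ⟨z, Concrete.limit_ext _ _ _ fun u => ?_⟩
  rw [← ConcreteCategory.comp_apply, limit.pre_π, hz]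
  funext q
  exact (dif_pos (hU q.2 u.unop.2)).trans (limit_π_apply_eq_diagonal G y u q _).symm

end Pi0

theorem iotaPi0_app_apply_self (G : Pᵒᵖ ⥤ ModuleCat A) (X : Pᵒᵖ) (x : G.obj X) :
    ((iotaPi0 G).app X x : ∀ q : {q : P // q ≤ X.unop}, G.obj (op (q : P)))
      ⟨X.unop, le_rfl⟩ = x := by
  change G.map (𝟙 X) x = x
  simp

theorem iotaPi0_app_injective (G : Pᵒᵖ ⥤ ModuleCat A) (X : Pᵒᵖ) :
    Function.Injective ((iotaPi0 G).app X) := fun a b h => by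
  rw [← iotaPi0_app_apply_self G X a, h, iotaPi0_app_apply_self]

instance mono_iotaPi0 (G : Pᵒᵖ ⥤ ModuleCat A) : Mono (iotaPi0 G) :=
  have (X : Pᵒᵖ) : Mono ((iotaPi0 G).app X) :=
    (ModuleCat.mono_iff_injective _).mpr (iotaPi0_app_injective G X)
  NatTrans.mono_of_mono_app _

theorem pi0_isFlasque_and_mono_general
    (G : Pᵒᵖ ⥤ ModuleCat A) :
    IsFlasque (Pi0 G) ∧ Mono (iotaPi0 G) :=
  ⟨Pi0.isFlasque G, inferInstance⟩

/-- Let `A` be a commutative Noetherian ring, `P` a finite poset and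
`G` an inverse system over `P` valued in `A`-modules.  Then the inverse system
`Π⁰(G)` (with `Π⁰(G)(p) = ∏_{q ≤ p} G(q)` and projections as transition maps) is
flasque, and the natural morphism of inverse systems `G ⟶ Π⁰(G)` is a monomorphism.
In particular, every inverse system over `P` embeds into a flasque one. -/
theorem pi0_isFlasque_and_mono [IsNoetherianRing A] [Finite P]
    (G : Pᵒᵖ ⥤ ModuleCat A) :
    IsFlasque (Pi0 G) ∧ Mono (iotaPi0 G) :=
  pi0_isFlasque_and_mono_general G

end
end

section
/- Let A be a commutative Noetherian ring and let P be a finite partially ordered set. Then every injective object of the category Inv(P, Mod_A) of inverse systems over P valued in A-modules is flasque. -/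
open CategoryTheory CategoryTheory.Limits

noncomputable section

variable {A : Type} [CommRing A] {P : Type} [PartialOrder P]

/-! For a lower set `U`, let `A_U` be the inverse system that is `A` on `U` and `0` off `U`,
with the inclusions as transition maps; it is a subsystem of the constant system `A`, and an
element `x` of `lim_U G` is a morphism `A_U ⟶ G` sending `1` at `u` to `x_u`. An element of
`lim_P G` is a morphism from the constant system `A`, and injectivity of `G` extends `A_U ⟶ G`
along `A_U ↪ A` to such an element, which restricts to `x`. -/

section AntitoneSubmoduleSystem

variable {R : Type} [Ring R] {I : Type} [Preorder I] {M : Type} [AddCommGroup M] [Module R M]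
  (S : I → Submodule R M) (hS : Antitone S)

def antitoneSubmoduleSystem : Iᵒᵖ ⥤ ModuleCat R where
  obj i := ModuleCat.of R (S i.unop)
  map f := ModuleCat.ofHom (Submodule.inclusion (hS (leOfHom f.unop)))

def antitoneSubmoduleSystem.ι :
    antitoneSubmoduleSystem S hS ⟶ (Functor.const Iᵒᵖ).obj (ModuleCat.of R M) where
  app i := ModuleCat.ofHom (S i.unop).subtype

instance : Mono (antitoneSubmoduleSystem.ι S hS) :=
  have (i : Iᵒᵖ) : Mono ((antitoneSubmoduleSystem.ι S hS).app i) :=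
    (ModuleCat.mono_iff_injective _).mpr Subtype.val_injective
  NatTrans.mono_of_mono_app _

end AntitoneSubmoduleSystem

section IndicatorSystem

open scoped Classical in
def indicatorIdeal (R : Type*) [Semiring R] {X : Type*} (U : Set X) (x : X) : Ideal R :=
  if x ∈ U then ⊤ else ⊥

section IndicatorIdeal

variable {R : Type*} [Semiring R] {X : Type*} {U : Set X} {x : X}

theorem indicatorIdeal_of_mem (hx : x ∈ U) : indicatorIdeal R U x = ⊤ :=
  if_pos hx

theorem indicatorIdeal_of_notMem (hx : x ∉ U) : indicatorIdeal R U x = ⊥ :=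
  if_neg hx

theorem one_mem_indicatorIdeal (hx : x ∈ U) : (1 : R) ∈ indicatorIdeal R U x := by
  rw [indicatorIdeal_of_mem hx]
  trivial

theorem antitone_indicatorIdeal [Preorder X] (hU : IsLowerSet U) :
    Antitone (indicatorIdeal R U) := by
  intro y x hyx
  by_cases hx : x ∈ U
  · rw [indicatorIdeal_of_mem hx, indicatorIdeal_of_mem (hU hyx hx)]
  · rw [indicatorIdeal_of_notMem hx]
    exact bot_le

end IndicatorIdeal

variable {U : Set P} (G : Pᵒᵖ ⥤ ModuleCat A) (x : ToType (limit ((inclFunctor U).op ⋙ G)))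

open scoped Classical in
def indicatorHomApp (p : P) : indicatorIdeal A U p →ₗ[A] G.obj (Opposite.op p) :=
  if h : p ∈ U then
    (indicatorIdeal A U p).subtype.smulRight
      (limit.π ((inclFunctor U).op ⋙ G) (Opposite.op ⟨p, h⟩) x)
  else 0

variable {G x}

theorem indicatorHomApp_of_mem {p : P} (hp : p ∈ U) (s : indicatorIdeal A U p) :
    indicatorHomApp G x p s =
      (s : A) • limit.π ((inclFunctor U).op ⋙ G) (Opposite.op ⟨p, hp⟩) x := by
  rw [indicatorHomApp, dif_pos hp]
  rfl

theorem indicatorHomApp_inclusion (hU : IsLowerSet U) {p q : P} (hqp : q ≤ p)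
    (s : indicatorIdeal A U p) :
    indicatorHomApp G x q (Submodule.inclusion (antitone_indicatorIdeal hU hqp) s) =
      G.map (homOfLE hqp).op (indicatorHomApp G x p s) := by
  by_cases hp : p ∈ U
  · have hq : q ∈ U := hU hqp hp
    rw [indicatorHomApp_of_mem hq, indicatorHomApp_of_mem hp,
      ← limit.w_apply _ (homOfLE hqp : (⟨q, hq⟩ : U) ⟶ ⟨p, hp⟩).op x]
    exact (map_smul (G.map (homOfLE hqp).op).hom _ _).symm
  · obtain rfl : s = 0 := Subtype.ext <| by simpa [indicatorIdeal_of_notMem hp] using s.2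
    simp

variable (G x) in
def indicatorHom (hU : IsLowerSet U) :
    antitoneSubmoduleSystem (indicatorIdeal A U) (antitone_indicatorIdeal hU) ⟶ G where
  app p := ModuleCat.ofHom (indicatorHomApp G x p.unop)
  naturality p q f := by
    ext s
    exact indicatorHomApp_inclusion hU (leOfHom f.unop) s

theorem indicatorHom_app_one (hU : IsLowerSet U) (u : U) :
    (indicatorHom G x hU).app (Opposite.op u.1) ⟨1, one_mem_indicatorIdeal u.2⟩ =
      limit.π ((inclFunctor U).op ⋙ G) (Opposite.op u) x :=
  (indicatorHomApp_of_mem u.2 _).trans (one_smul A _)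

end IndicatorSystem

theorem isFlasque_of_injective_general
    (G : Pᵒᵖ ⥤ ModuleCat A) (hG : Injective G) : IsFlasque G := by
  intro U hU x
  obtain ⟨θ, hθ⟩ := hG.factors (indicatorHom G x hU) (antitoneSubmoduleSystem.ι _ _)
  refine ⟨limit.lift G ⟨ModuleCat.of A A, θ⟩ 1, Concrete.limit_ext _ _ _ fun u => ?_⟩
  rw [← ConcreteCategory.comp_apply, limit.pre_π, limit.lift_π_apply]
  exact (ConcreteCategory.congr_hom (NatTrans.congr_app hθ _) _).trans (indicatorHom_app_one hU _)

/-- Let `A` be a commutative Noetherian ring and `P` a finite poset.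
Then every injective object of the category `Inv(P, Mod_A)` of inverse systems over
`P` valued in `A`-modules is flasque. -/
theorem isFlasque_of_injective [IsNoetherianRing A] [Finite P]
    (G : Pᵒᵖ ⥤ ModuleCat A) (hG : Injective G) : IsFlasque G :=
  isFlasque_of_injective_general G hG

end
end
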